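/- Let a₀, a₁, a₂ : ℝ³ → ℝ be C^1 functions and μ : ℝ³ → ℝ a C^1 function such that the products A₂ = μa₂, A₁ = μa₁, A₀ = μa₀ satisfy the exactness conditions ∂A₂/∂y = ∂A₁/∂p, ∂A₂/∂x = ∂A₀/∂p, ∂A₁/∂x = ∂A₀/∂y everywhere. Then μ satisfies the identity [(∂a₀/∂y − ∂a₁/∂x)a₂ + (∂a₂/∂x − ∂a₀/∂p)a₁ + (∂a₁/∂p − ∂a₂/∂y)a₀] · μ = 0 at every point. -/

import Mathlib

noncomputable section

/-- Partial derivative w.r.t. the first variable. -/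
def pd1 (f : ℝ → ℝ → ℝ → ℝ) (x y p : ℝ) : ℝ := deriv (fun t => f t y p) x

/-- Partial derivative w.r.t. the second variable. -/
def pd2 (f : ℝ → ℝ → ℝ → ℝ) (x y p : ℝ) : ℝ := deriv (fun t => f x t p) y

/-- Partial derivative w.r.t. the third variable. -/
def pd3 (f : ℝ → ℝ → ℝ → ℝ) (x y p : ℝ) : ℝ := deriv (fun t => f x y t) p

/-- `f : ℝ³ → ℝ` (curried) is continuously differentiable. -/
def C1 (f : ℝ → ℝ → ℝ → ℝ) : Prop :=
  ContDiff ℝ 1 (fun q : ℝ × ℝ × ℝ => f q.1 q.2.1 q.2.2)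

/-- The three exactness symmetry conditions for coefficients `a₂, a₁, a₀`. -/
def ExactConds (a0 a1 a2 : ℝ → ℝ → ℝ → ℝ) : Prop :=
  (∀ x y p, pd2 a2 x y p = pd3 a1 x y p) ∧
  (∀ x y p, pd1 a2 x y p = pd3 a0 x y p) ∧
  (∀ x y p, pd1 a1 x y p = pd2 a0 x y p)

/-! Writing `a = (a₀, a₁, a₂)` as a vector field in the coordinates `(x, y, p)`, exactness of
`μ a` says `curl (μ a) = 0`. Since `curl (μ a) = μ curl a + ∇μ × a`, taking the dot product
with `a` kills the `∇μ` term and leaves `μ (a · curl a) = 0`, which is the identity. -/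

section PartialDerivatives

variable {f g : ℝ → ℝ → ℝ → ℝ} {x y p : ℝ}

lemma pd1_mul (hf : DifferentiableAt ℝ (fun t => f t y p) x)
    (hg : DifferentiableAt ℝ (fun t => g t y p) x) :
    pd1 (fun x y p => f x y p * g x y p) x y p = pd1 f x y p * g x y p + f x y p * pd1 g x y p :=
  deriv_fun_mul hf hg

lemma pd2_mul (hf : DifferentiableAt ℝ (fun t => f x t p) y)
    (hg : DifferentiableAt ℝ (fun t => g x t p) y) :
    pd2 (fun x y p => f x y p * g x y p) x y p = pd2 f x y p * g x y p + f x y p * pd2 g x y p :=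
  deriv_fun_mul hf hg

lemma pd3_mul (hf : DifferentiableAt ℝ (fun t => f x y t) p)
    (hg : DifferentiableAt ℝ (fun t => g x y t) p) :
    pd3 (fun x y p => f x y p * g x y p) x y p = pd3 f x y p * g x y p + f x y p * pd3 g x y p :=
  deriv_fun_mul hf hg

end PartialDerivatives

namespace C1

variable {f : ℝ → ℝ → ℝ → ℝ}

lemma differentiable (hf : C1 f) : Differentiable ℝ (fun q : ℝ × ℝ × ℝ => f q.1 q.2.1 q.2.2) :=
  ContDiff.differentiable hf one_ne_zero

lemma differentiableAt_slice₁ (hf : C1 f) (x y p : ℝ) :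
    DifferentiableAt ℝ (fun t => f t y p) x :=
  hf.differentiable.differentiableAt.comp (f := fun t : ℝ => (t, y, p)) x (by fun_prop)

lemma differentiableAt_slice₂ (hf : C1 f) (x y p : ℝ) :
    DifferentiableAt ℝ (fun t => f x t p) y :=
  hf.differentiable.differentiableAt.comp (f := fun t : ℝ => (x, t, p)) y (by fun_prop)

lemma differentiableAt_slice₃ (hf : C1 f) (x y p : ℝ) :
    DifferentiableAt ℝ (fun t => f x y t) p :=
  hf.differentiable.differentiableAt.comp (f := fun t : ℝ => (x, y, t)) p (by fun_prop)

end C1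

theorem integrating_factor_identity
    (a0 a1 a2 μ : ℝ → ℝ → ℝ → ℝ)
    (ha0 : C1 a0) (ha1 : C1 a1) (ha2 : C1 a2) (hμ : C1 μ)
    (hexact : ExactConds (fun x y p => μ x y p * a0 x y p)
      (fun x y p => μ x y p * a1 x y p)
      (fun x y p => μ x y p * a2 x y p)) :
    ∀ x y p,
      ((pd2 a0 x y p - pd1 a1 x y p) * a2 x y p +
       (pd1 a2 x y p - pd3 a0 x y p) * a1 x y p +
       (pd3 a1 x y p - pd2 a2 x y p) * a0 x y p) * μ x y p = 0 := by
  intro x y p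
  obtain ⟨hyp, hxp, hxy⟩ := hexact
  have curl_x := hyp x y p
  have curl_y := hxp x y p
  have curl_p := hxy x y p
  rw [pd2_mul (hμ.differentiableAt_slice₂ x y p) (ha2.differentiableAt_slice₂ x y p),
    pd3_mul (hμ.differentiableAt_slice₃ x y p) (ha1.differentiableAt_slice₃ x y p)] at curl_x
  rw [pd1_mul (hμ.differentiableAt_slice₁ x y p) (ha2.differentiableAt_slice₁ x y p),
    pd3_mul (hμ.differentiableAt_slice₃ x y p) (ha0.differentiableAt_slice₃ x y p)] at curl_y
  rw [pd1_mul (hμ.differentiableAt_slice₁ x y p) (ha1.differentiableAt_slice₁ x y p),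
    pd2_mul (hμ.differentiableAt_slice₂ x y p) (ha0.differentiableAt_slice₂ x y p)] at curl_p
  linear_combination (-a0 x y p) * curl_x + a1 x y p * curl_y - a2 x y p * curl_p
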